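/- arXiv:1202.5068 — 2 statements merged into one kernel-verified Lean document; each statement's English description precedes it below -/
import Mathlib

section
/- For p > 1, the function G_p(x,t) = t^{-(n+p-2)/(2(p-1))} exp(-|x|^2/(4(p-1)t)) is a classical solution of the equation u_t = Δu + (p-2) ⟨D²u Du, Du⟩/|Du|² at every point (x,t) with x ≠ 0 and t > 0. -/
open Real Set

section Aux

variable {E : Type*} [NormedAddCommGroup E] [InnerProductSpace ℝ E]

private lemma aux_fderiv (k A : ℝ) (y : E) :
    HasFDerivAt (fun z : E => k * Real.exp (-‖z‖ ^ 2 / A))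
      ((-2 / A * (k * Real.exp (-‖y‖ ^ 2 / A))) • (innerSL ℝ y)) y := by
  have h1 : HasFDerivAt (fun z : E => -‖z‖ ^ 2 / A) ((-1 / A) • (2 • innerSL ℝ y)) y := by
    have heq : (fun z : E => -‖z‖ ^ 2 / A) = fun z : E => (-1 / A) * ‖z‖ ^ 2 := by
      funext z; ring
    rw [heq]
    exact (hasStrictFDerivAt_norm_sq y).hasFDerivAt.const_mul (-1 / A)
  have h3 := (h1.exp).const_mul k
  refine h3.congr_fderiv ?_
  ext v
  simp [smul_smul]
  ring

private lemma aux_fderiv_eq (k A : ℝ) (y : E) :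
    fderiv ℝ (fun z : E => k * Real.exp (-‖z‖ ^ 2 / A)) y
      = (-2 / A * (k * Real.exp (-‖y‖ ^ 2 / A))) • (innerSL ℝ y) :=
  (aux_fderiv k A y).fderiv

private lemma aux_second (k A : ℝ) (x v w : E) :
    fderiv ℝ (fun y : E => fderiv ℝ (fun z : E => k * Real.exp (-‖z‖ ^ 2 / A)) y v) x w =
      -2 / A * (k * Real.exp (-‖x‖ ^ 2 / A)) * (inner ℝ v w : ℝ) +
      (-2 / A) ^ 2 * (k * Real.exp (-‖x‖ ^ 2 / A)) * (inner ℝ v x : ℝ) * (inner ℝ x w : ℝ) := by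
  have heq : (fun y : E => fderiv ℝ (fun z : E => k * Real.exp (-‖z‖ ^ 2 / A)) y v)
      = fun y : E => (-2 / A) * ((k * Real.exp (-‖y‖ ^ 2 / A)) * (innerSL ℝ v) y) := by
    funext y
    rw [aux_fderiv_eq]
    simp only [ContinuousLinearMap.smul_apply, innerSL_apply_apply, smul_eq_mul]
    rw [real_inner_comm]
    ring
  rw [heq]
  have hmul : HasFDerivAt (fun y : E => (k * Real.exp (-‖y‖ ^ 2 / A)) * (innerSL ℝ v) y)
      ((k * Real.exp (-‖x‖ ^ 2 / A)) • (innerSL ℝ v)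
        + ((innerSL ℝ v) x) • ((-2 / A * (k * Real.exp (-‖x‖ ^ 2 / A))) • (innerSL ℝ x))) x :=
    (aux_fderiv k A x).mul ((innerSL ℝ v).hasFDerivAt)
  rw [(hmul.const_mul (-2 / A)).fderiv]
  simp only [ContinuousLinearMap.smul_apply, ContinuousLinearMap.add_apply, innerSL_apply_apply,
    smul_eq_mul]
  ring

private lemma aux_grad [CompleteSpace E] (k A : ℝ) (x : E) :
    gradient (fun z : E => k * Real.exp (-‖z‖ ^ 2 / A)) x
      = (-2 / A * (k * Real.exp (-‖x‖ ^ 2 / A))) • x := by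
  apply HasGradientAt.gradient
  rw [hasGradientAt_iff_hasFDerivAt]
  refine (aux_fderiv k A x).congr_fderiv ?_
  ext v
  simp [InnerProductSpace.toDual_apply_apply, inner_smul_left]

end Aux

/-- For `p > 1`, the function
`G_p(x,t) = t^{-(n+p-2)/(2(p-1))} exp(-|x|²/(4(p-1)t))` is a classical solution of
`u_t = Δu + (p-2) ⟨D²u Du, Du⟩ / |Du|²` at every point `(x,t)` with `x ≠ 0`, `t > 0`. -/
theorem stmt0 (n : ℕ) (p : ℝ) (hp : 1 < p)
    (G : EuclideanSpace ℝ (Fin n) → ℝ → ℝ)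
    (hG : G = fun x t => t ^ (-((n : ℝ) + p - 2) / (2 * (p - 1))) *
      Real.exp (-‖x‖ ^ 2 / (4 * (p - 1) * t)))
    (x : EuclideanSpace ℝ (Fin n)) (t : ℝ) (hx : x ≠ 0) (ht : 0 < t)
    (Du : EuclideanSpace ℝ (Fin n))
    (hDu : Du = gradient (fun z => G z t) x) :
    ContDiffAt ℝ (⊤ : ℕ∞) (fun q : EuclideanSpace ℝ (Fin n) × ℝ => G q.1 q.2) (x, t) ∧
    deriv (G x) t =
      (∑ i : Fin n,
        fderiv ℝ (fun y => fderiv ℝ (fun z => G z t) y (EuclideanSpace.single i 1)) x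
          (EuclideanSpace.single i 1))
      + (p - 2) *
        (fderiv ℝ (fun y => fderiv ℝ (fun z => G z t) y Du) x Du) / ‖Du‖ ^ 2 := by
  have hq : (0:ℝ) < p - 1 := by linarith
  set α : ℝ := -((n : ℝ) + p - 2) / (2 * (p - 1)) with hα
  subst hG
  subst hDu
  beta_reduce
  constructor
  · -- smoothness
    have h1 : ContDiffAt ℝ (⊤ : ℕ∞) (fun q : EuclideanSpace ℝ (Fin n) × ℝ => q.2 ^ α) (x, t) :=
      (Real.contDiffAt_rpow_const_of_ne ht.ne').comp (f := Prod.snd) (x, t) contDiffAt_snd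
    have hn : ContDiffAt ℝ (⊤ : ℕ∞) (fun q : EuclideanSpace ℝ (Fin n) × ℝ => -‖q.1‖ ^ 2) (x, t) := by
      have h : ContDiff ℝ (⊤ : ℕ∞) (fun z : EuclideanSpace ℝ (Fin n) => ‖z‖ ^ 2) := by
        have h0 := (contDiff_id (E := EuclideanSpace ℝ (Fin n)) (𝕜 := ℝ) (n := (⊤ : ℕ∞))).inner ℝ
          (contDiff_id (E := EuclideanSpace ℝ (Fin n)))
        have heq : (fun z : EuclideanSpace ℝ (Fin n) => ‖z‖ ^ 2)
            = fun z : EuclideanSpace ℝ (Fin n) => (inner ℝ (id z) (id z) : ℝ) := by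
          funext z; exact (real_inner_self_eq_norm_sq z).symm
        rw [heq]; exact h0
      exact ((h.comp contDiff_fst).neg).contDiffAt
    have h2 : ContDiffAt ℝ (⊤ : ℕ∞) (fun q : EuclideanSpace ℝ (Fin n) × ℝ =>
        -‖q.1‖ ^ 2 / (4 * (p - 1) * q.2)) (x, t) :=
      hn.div ((contDiffAt_const (c := 4 * (p - 1))).mul contDiffAt_snd)
        (ne_of_gt (by nlinarith : (0:ℝ) < 4 * (p - 1) * t))
    exact h1.mul ((Real.contDiff_exp.contDiffAt).comp _ h2)
  · -- the PDE
    have hAt : (0:ℝ) < 4 * (p - 1) * t := by nlinarith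
    -- time derivative
    have hT : HasDerivAt (fun s : ℝ => s ^ α * Real.exp (-‖x‖ ^ 2 / (4 * (p - 1) * s)))
        (α * t ^ (α - 1) * Real.exp (-‖x‖ ^ 2 / (4 * (p - 1) * t))
          + t ^ α * (Real.exp (-‖x‖ ^ 2 / (4 * (p - 1) * t))
            * (-‖x‖ ^ 2 / (4 * (p - 1)) * (-(t ^ 2)⁻¹)))) t := by
      have h1 : HasDerivAt (fun s : ℝ => s ^ α) (α * t ^ (α - 1)) t :=
        Real.hasDerivAt_rpow_const (Or.inl ht.ne')
      have h2 : HasDerivAt (fun s : ℝ => -‖x‖ ^ 2 / (4 * (p - 1) * s))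
          (-‖x‖ ^ 2 / (4 * (p - 1)) * (-(t ^ 2)⁻¹)) t := by
        have h0 := (hasDerivAt_inv ht.ne').const_mul (-‖x‖ ^ 2 / (4 * (p - 1)))
        have heq : (fun s : ℝ => -‖x‖ ^ 2 / (4 * (p - 1) * s))
            = fun s : ℝ => (-‖x‖ ^ 2 / (4 * (p - 1))) * s⁻¹ := by
          funext s; rw [← div_div, div_eq_mul_inv]
        rw [heq]; exact h0
      exact h1.mul h2.exp
    rw [hT.deriv]
    rw [aux_grad]
    -- rewrite second derivatives
    simp only [aux_second]
    -- inner products with single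
    simp only [EuclideanSpace.inner_single_left, EuclideanSpace.inner_single_right,
      RCLike.inner_apply, starRingEnd_apply, star_trivial, one_mul, mul_one,
      real_inner_smul_left, real_inner_smul_right, real_inner_self_eq_norm_sq]
    have hxsum : (∑ i, x i * x i) = ‖x‖ ^ 2 := by
      rw [EuclideanSpace.norm_eq, Real.sq_sqrt (by positivity)]
      exact Finset.sum_congr rfl fun i _ => by rw [Real.norm_eq_abs, sq_abs, sq]
    have hnormDu : ‖(-2 / (4 * (p - 1) * t) * (t ^ α * Real.exp (-‖x‖ ^ 2 / (4 * (p - 1) * t)))) • x‖ ^ 2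
        = (-2 / (4 * (p - 1) * t) * (t ^ α * Real.exp (-‖x‖ ^ 2 / (4 * (p - 1) * t)))) ^ 2 * ‖x‖ ^ 2 := by
      rw [norm_smul, mul_pow, Real.norm_eq_abs, sq_abs]
    rw [hnormDu]
    simp only [EuclideanSpace.single_apply, eq_self_iff_true, if_true, mul_one]
    have hsum2 : ∀ C : ℝ, (∑ i : Fin n, C * x i * x i) = C * ‖x‖ ^ 2 := by
      intro C; rw [← hxsum, Finset.mul_sum]; exact Finset.sum_congr rfl fun i _ => by ring
    rw [Finset.sum_add_distrib, hsum2, Finset.sum_const, Finset.card_univ, Fintype.card_fin, nsmul_eq_mul]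
    rw [Real.rpow_sub_one ht.ne']
    have hE : Real.exp (-‖x‖ ^ 2 / (4 * (p - 1) * t)) ≠ 0 := Real.exp_ne_zero _
    have hTpos : (0:ℝ) < t ^ α := Real.rpow_pos_of_pos ht α
    have hT0 : t ^ α ≠ 0 := ne_of_gt hTpos
    have hxn : ‖x‖ ≠ 0 := norm_ne_zero_iff.mpr hx
    have hq' : p - 1 ≠ 0 := ne_of_gt hq
    have hc0 : -2 / (4 * (p - 1) * t) * (t ^ α * Real.exp (-‖x‖ ^ 2 / (4 * (p - 1) * t))) ≠ 0 := by
      apply mul_ne_zero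
      · exact div_ne_zero (by norm_num) (ne_of_gt hAt)
      · exact mul_ne_zero hT0 hE
    rw [hα]
    field_simp
    ring
end

section
/- Let p > 1, a > 0, T > 0 with 4a(p-1)T < 1, and K ∈ ℝ, μ > 0, y ∈ ℝⁿ, ε > 0 with 4a(p-1)(T+ε) < 1. Then the function v(x,t) = K + μ (T+ε-t)^{-(n+p-2)/(2p-2)} exp(|x-y|²/(4(p-1)(T+ε-t))) is a classical solution of the normalized equation u_t = Δu + (p-2)⟨D²u Du, Du⟩/|Du|² at every point (x,t) with x ≠ y and 0 ≤ t ≤ T. -/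
/-! On the time slice `t`, with `s = T + ε - t`, the function is `K + c exp (b ‖x - y‖²)` where
`c = μ s^r`, `r = -(n + p - 2)/(2p - 2)` and `b = 1/(4(p - 1)s)`. Its gradient
`2bc e^{b‖x-y‖²} (x - y)` is radial, so the normalized term is the second derivative along
`x - y`, namely `2bc e^{b‖x-y‖²} (2b‖x - y‖² + 1)`, while the Laplacian is
`2bc e^{b‖x-y‖²} (2b‖x - y‖² + n)`. Both are proportional to `μ s^(r-1) e^{b‖x-y‖²}`, as is the
time derivative, and the choice of `r` makes the coefficients agree. -/

open Real RealInnerProductSpace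

section Space

variable {E : Type*} [NormedAddCommGroup E] [InnerProductSpace ℝ E]

theorem hasFDerivAt_exp_norm_sub_sq (K c b : ℝ) (y x : E) :
    HasFDerivAt (fun z => K + c * exp (b * ‖z - y‖ ^ 2))
      ((2 * b * c * exp (b * ‖x - y‖ ^ 2)) • innerSL ℝ (x - y)) x := by
  have h := ((((hasFDerivAt_sub_const (x := x) y).norm_sq).const_mul b).exp.const_mul c).const_add K
  refine h.congr_fderiv ?_
  ext u
  simp only [smul_apply, ContinuousLinearMap.comp_apply, innerSL_apply_apply,
    smul_eq_mul, ContinuousLinearMap.id_apply]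
  ring

theorem fderiv_exp_norm_sub_sq_apply (K c b : ℝ) (y x u : E) :
    fderiv ℝ (fun z => K + c * exp (b * ‖z - y‖ ^ 2)) x u
      = 2 * b * c * exp (b * ‖x - y‖ ^ 2) * ⟪x - y, u⟫ := by
  rw [(hasFDerivAt_exp_norm_sub_sq K c b y x).fderiv]
  rfl

theorem gradient_exp_norm_sub_sq [CompleteSpace E] (K c b : ℝ) (y x : E) :
    gradient (fun z => K + c * exp (b * ‖z - y‖ ^ 2)) x
      = (2 * b * c * exp (b * ‖x - y‖ ^ 2)) • (x - y) := by
  refine (hasGradientAt_iff_hasFDerivAt.mpr ?_).gradient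
  refine (hasFDerivAt_exp_norm_sub_sq K c b y x).congr_fderiv ?_
  ext u
  simp [InnerProductSpace.toDual_apply_apply]

theorem fderiv_fderiv_exp_norm_sub_sq_apply (K c b : ℝ) (y x u u' : E) :
    fderiv ℝ (fun z => fderiv ℝ (fun w => K + c * exp (b * ‖w - y‖ ^ 2)) z u) x u'
      = 2 * b * c * exp (b * ‖x - y‖ ^ 2) * (2 * b * ⟪x - y, u'⟫ * ⟪x - y, u⟫ + ⟪u', u⟫) := by
  have h := (hasFDerivAt_exp_norm_sub_sq 0 (2 * b * c) b y x).fun_mul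
    ((hasFDerivAt_sub_const (x := x) y).inner ℝ (hasFDerivAt_const u x))
  simp only [zero_add] at h
  simp only [fderiv_exp_norm_sub_sq_apply, h.fderiv]
  simp [inner_sub_left]
  ring

theorem sum_fderiv_fderiv_exp_norm_sub_sq_orthonormalBasis {ι : Type*} [Fintype ι]
    (B : OrthonormalBasis ι ℝ E) (K c b : ℝ) (y x : E) :
    ∑ i, fderiv ℝ (fun z => fderiv ℝ (fun w => K + c * exp (b * ‖w - y‖ ^ 2)) z (B i)) x (B i)
      = 2 * b * c * exp (b * ‖x - y‖ ^ 2) * (2 * b * ‖x - y‖ ^ 2 + Fintype.card ι) := by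
  have hB (i : ι) : ⟪B i, B i⟫ = 1 := by simp
  have hsum : ∑ i, ⟪x - y, B i⟫ * ⟪x - y, B i⟫ = ‖x - y‖ ^ 2 := by
    simpa [real_inner_comm, sq] using B.sum_sq_norm_inner_right (x - y)
  simp only [fderiv_fderiv_exp_norm_sub_sq_apply, hB, mul_assoc (2 * b), ← Finset.mul_sum,
    Finset.sum_add_distrib, hsum, Finset.sum_const, Finset.card_univ, nsmul_eq_mul, mul_one]

theorem fderiv_fderiv_exp_norm_sub_sq_smul_div (K c b : ℝ) {φ : ℝ} (hφ : φ ≠ 0) {y x : E}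
    (hxy : x ≠ y) :
    fderiv ℝ (fun z => fderiv ℝ (fun w => K + c * exp (b * ‖w - y‖ ^ 2)) z (φ • (x - y))) x
        (φ • (x - y)) / ‖φ • (x - y)‖ ^ 2
      = 2 * b * c * exp (b * ‖x - y‖ ^ 2) * (2 * b * ‖x - y‖ ^ 2 + 1) := by
  have hxy' : ‖x - y‖ ≠ 0 := norm_ne_zero_iff.mpr (sub_ne_zero.mpr hxy)
  rw [fderiv_fderiv_exp_norm_sub_sq_apply]
  simp only [real_inner_smul_right, real_inner_self_eq_norm_sq, norm_smul,
    Real.norm_eq_abs, mul_pow, sq_abs]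
  field_simp

end Space

noncomputable def normalizedPLaplacian {ι : Type*} [Fintype ι] [DecidableEq ι] (p : ℝ)
    (f : EuclideanSpace ℝ ι → ℝ) (x : EuclideanSpace ℝ ι) : ℝ :=
  (∑ i, fderiv ℝ (fun z => fderiv ℝ f z (EuclideanSpace.single i 1)) x
      (EuclideanSpace.single i 1))
    + (p - 2) * fderiv ℝ (fun z => fderiv ℝ f z (gradient f x)) x (gradient f x)
      / ‖gradient f x‖ ^ 2

theorem normalizedPLaplacian_exp_norm_sub_sq {ι : Type*} [Fintype ι] [DecidableEq ι] (p K c b : ℝ)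
    {y x : EuclideanSpace ℝ ι} (hxy : x ≠ y) :
    normalizedPLaplacian p (fun z => K + c * exp (b * ‖z - y‖ ^ 2)) x
      = 2 * b * c * exp (b * ‖x - y‖ ^ 2)
          * ((p - 1) * (2 * b * ‖x - y‖ ^ 2) + Fintype.card ι + p - 2) := by
  have hΔ := sum_fderiv_fderiv_exp_norm_sub_sq_orthonormalBasis
    (EuclideanSpace.basisFun ι ℝ) K c b y x
  simp only [EuclideanSpace.basisFun_apply] at hΔ
  rw [normalizedPLaplacian, hΔ, gradient_exp_norm_sub_sq]
  -- when the gradient vanishes, so does its coefficient, and the junk value `0 / 0 = 0` fits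
  rcases eq_or_ne (2 * b * c * exp (b * ‖x - y‖ ^ 2)) 0 with hφ | hφ
  · simp [hφ]
  · rw [mul_div_assoc, fderiv_fderiv_exp_norm_sub_sq_smul_div K c b hφ hxy]
    ring

theorem hasDerivAt_rpow_mul_exp_div (K μ r Q A S : ℝ) {t : ℝ} (hA : A ≠ 0) (ht : t < S) :
    HasDerivAt (fun τ => K + μ * (S - τ) ^ r * exp (Q / (A * (S - τ))))
      (μ * (S - t) ^ r * exp (Q / (A * (S - t))) / (S - t) * (Q / (A * (S - t)) - r)) t := by
  have hs : 0 < S - t := sub_pos.mpr ht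
  have hS : HasDerivAt (fun τ => S - τ) (-1) t := (hasDerivAt_id t).const_sub S
  have h := (((hS.rpow_const (p := r) (Or.inl hs.ne')).const_mul μ).mul
    ((hasDerivAt_const t Q).div (hS.const_mul A) (mul_ne_zero hA hs.ne')).exp).const_add K
  refine h.congr_deriv ?_
  simp only [Pi.div_apply, rpow_sub hs, rpow_one]
  field_simp
  ring

theorem stmt9_general (n : ℕ) (p T K μ ε : ℝ) (hp : 1 < p) (hε : 0 < ε)
    (y : EuclideanSpace ℝ (Fin n))
    (v : EuclideanSpace ℝ (Fin n) → ℝ → ℝ)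
    (hv : v = fun x t => K + μ * (T + ε - t) ^ (-((n : ℝ) + p - 2) / (2 * p - 2)) *
      Real.exp (‖x - y‖ ^ 2 / (4 * (p - 1) * (T + ε - t)))) :
    ∀ (x : EuclideanSpace ℝ (Fin n)) (t : ℝ), x ≠ y → 0 ≤ t → t ≤ T →
      deriv (v x) t =
        (∑ i : Fin n,
          fderiv ℝ (fun z => fderiv ℝ (fun w => v w t) z (EuclideanSpace.single i 1)) x
            (EuclideanSpace.single i 1))
        + (p - 2) *
          (fderiv ℝ (fun z => fderiv ℝ (fun w => v w t) z (gradient (fun w => v w t) x)) x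
            (gradient (fun w => v w t) x)) / ‖gradient (fun w => v w t) x‖ ^ 2 := by
  intro x t hxy _ htT
  set r := -((n : ℝ) + p - 2) / (2 * p - 2) with hr
  have hts : t < T + ε := by linarith
  have hp1 : p - 1 ≠ 0 := by linarith
  have hcurve : v x = fun τ => K + μ * (T + ε - τ) ^ r
      * exp (‖x - y‖ ^ 2 / (4 * (p - 1) * (T + ε - τ))) := by
    rw [hv]
  have hslice : (fun w => v w t) = fun z => K + μ * (T + ε - t) ^ r
      * exp (1 / (4 * (p - 1) * (T + ε - t)) * ‖z - y‖ ^ 2) := by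
    simp only [hv, one_div_mul_eq_div]
  rw [hcurve, (hasDerivAt_rpow_mul_exp_div _ _ _ _ _ _ (mul_ne_zero four_ne_zero hp1) hts).deriv]
  change _ = normalizedPLaplacian p (fun w => v w t) x
  rw [hslice, normalizedPLaplacian_exp_norm_sub_sq _ _ _ _ hxy, Fintype.card_fin]
  generalize (T + ε - t) ^ r = P
  rw [hr]
  have hs : T + ε - t ≠ 0 := by linarith
  field_simp
  ring

/-- Let `p > 1`, `a > 0`, `T > 0` with `4a(p-1)T < 1`, and `K ∈ ℝ`, `μ > 0`,
`y ∈ ℝⁿ`, `ε > 0` with `4a(p-1)(T+ε) < 1`. Then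
`v(x,t) = K + μ (T+ε-t)^{-(n+p-2)/(2p-2)} exp(|x-y|²/(4(p-1)(T+ε-t)))` is a classical
solution of `u_t = Δu + (p-2)⟨D²u Du, Du⟩/|Du|²` at every `(x,t)` with `x ≠ y`,
`0 ≤ t ≤ T`. -/
theorem stmt9 (n : ℕ) (p a T K μ ε : ℝ) (hp : 1 < p) (ha : 0 < a) (hT : 0 < T)
    (haT : 4 * a * (p - 1) * T < 1) (hμ : 0 < μ) (hε : 0 < ε)
    (haTε : 4 * a * (p - 1) * (T + ε) < 1)
    (y : EuclideanSpace ℝ (Fin n))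
    (v : EuclideanSpace ℝ (Fin n) → ℝ → ℝ)
    (hv : v = fun x t => K + μ * (T + ε - t) ^ (-((n : ℝ) + p - 2) / (2 * p - 2)) *
      Real.exp (‖x - y‖ ^ 2 / (4 * (p - 1) * (T + ε - t)))) :
    ∀ (x : EuclideanSpace ℝ (Fin n)) (t : ℝ), x ≠ y → 0 ≤ t → t ≤ T →
      deriv (v x) t =
        (∑ i : Fin n,
          fderiv ℝ (fun z => fderiv ℝ (fun w => v w t) z (EuclideanSpace.single i 1)) x
            (EuclideanSpace.single i 1))
        + (p - 2) *
          (fderiv ℝ (fun z => fderiv ℝ (fun w => v w t) z (gradient (fun w => v w t) x)) x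
            (gradient (fun w => v w t) x)) / ‖gradient (fun w => v w t) x‖ ^ 2 :=
  stmt9_general n p T K μ ε hp hε y v hv
end
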